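/- Let n ≥ 1 be arbitrary and set k = ⌊n/2⌋. Then the convex hull of the n×n VSASMs in ℝ^{n×n} equals P_ASM ∩ P_VS ∩ {X ∈ ℝ^{n×n} : x_{i,k+1} = (−1)^{i+1} for all i ∈ {1,…,n}}. -/
import Mathlib


/-- An `n × n` alternating sign matrix: entries in `{-1, 0, 1}`, all row- and
column-prefix sums lie in `{0, 1}`, and all full row and column sums equal `1`. -/
def IsASM (n : ℕ) (X : Fin n → Fin n → ℝ) : Prop :=
  (∀ i j, X i j = -1 ∨ X i j = 0 ∨ X i j = 1) ∧
  (∀ i j, (∑ j' ∈ Finset.Iic j, X i j') = 0 ∨ (∑ j' ∈ Finset.Iic j, X i j') = 1) ∧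
  (∀ i j, (∑ i' ∈ Finset.Iic i, X i' j) = 0 ∨ (∑ i' ∈ Finset.Iic i, X i' j) = 1) ∧
  (∀ i, (∑ j, X i j) = 1) ∧
  (∀ j, (∑ i, X i j) = 1)

namespace VSASMproof
open Finset

variable {n : ℕ}

lemma sum_int {α : Type*} (s : Finset α) (f : α → ℝ)
    (h : ∀ x ∈ s, f x = -1 ∨ f x = 0 ∨ f x = 1) : ∃ m : ℤ, ∑ x ∈ s, f x = m := by
  classical
  induction s using Finset.induction_on with
  | empty => exact ⟨0, by simp⟩
  | @insert a s ha ih =>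
    obtain ⟨m, hm⟩ := ih fun x hx => h x (Finset.mem_insert_of_mem hx)
    rcases h a (Finset.mem_insert_self a s) with h' | h' | h'
    · exact ⟨m - 1, by rw [Finset.sum_insert ha, hm, h']; push_cast; ring⟩
    · exact ⟨m, by rw [Finset.sum_insert ha, hm, h']; ring⟩
    · exact ⟨m + 1, by rw [Finset.sum_insert ha, hm, h']; push_cast; ring⟩

lemma sum_rev (f : Fin n → ℝ) : ∑ j : Fin n, f j.rev = ∑ j : Fin n, f j := by
  exact Fintype.sum_bijective Fin.rev Fin.rev_involutive.bijective
    (fun j : Fin n => f j.rev) f fun _ => rfl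

lemma sum_Ioi_rev (f : Fin n → ℝ) (j : Fin n) :
    ∑ j' ∈ Ioi j, f j'.rev = ∑ j' ∈ Iio j.rev, f j' := by
  refine Finset.sum_nbij' (fun a => a.rev) (fun a => a.rev) ?_ ?_
    (fun a _ => a.rev_rev) (fun a _ => a.rev_rev) (fun a _ => rfl) <;>
  · intro a ha
    have h1 := a.2
    have h2 := j.2
    simp only [Finset.mem_Ioi, Finset.mem_Iio, Fin.lt_def, Fin.val_rev] at ha ⊢
    omega

lemma sum_Iic_rev (f : Fin n → ℝ) (j : Fin n) :
    ∑ j' ∈ Iic j, f j'.rev = ∑ j' ∈ Ici j.rev, f j' := by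
  refine Finset.sum_nbij' (fun a => a.rev) (fun a => a.rev) ?_ ?_
    (fun a _ => a.rev_rev) (fun a _ => a.rev_rev) (fun a _ => rfl) <;>
  · intro a ha
    have h1 := a.2
    have h2 := j.2
    simp only [Finset.mem_Iic, Finset.mem_Ici, Fin.le_def, Fin.val_rev] at ha ⊢
    omega

lemma sum_Iic_add_sum_Ioi (f : Fin n → ℝ) (j : Fin n) :
    (∑ j' ∈ Iic j, f j') + ∑ j' ∈ Ioi j, f j' = ∑ j', f j' := by
  rw [← Finset.sum_union (by simp [Finset.disjoint_left])]
  congr 1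
  ext a
  simp [le_or_gt]

lemma sum_Iio_add_sum_Ici (f : Fin n → ℝ) (j : Fin n) :
    (∑ j' ∈ Iio j, f j') + ∑ j' ∈ Ici j, f j' = ∑ j', f j' := by
  rw [← Finset.sum_union (by simp [Finset.disjoint_left])]
  congr 1
  ext a
  simp [lt_or_ge]

lemma sum_Iic_eq_add (f : Fin n → ℝ) (j : Fin n) :
    ∑ j' ∈ Iic j, f j' = f j + ∑ j' ∈ Iio j, f j' := by
  rw [← Finset.Iio_insert, Finset.sum_insert (by simp)]

lemma rowIio_mem {A : Fin n → Fin n → ℝ} (hA : IsASM n A) (i j : Fin n) :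
    (∑ j' ∈ Iio j, A i j') = 0 ∨ (∑ j' ∈ Iio j, A i j') = 1 := by
  rcases hm : (j : ℕ) with _ | m
  · left
    rw [show Iio j = ∅ by ext a; simp [Fin.lt_def, hm]]
    simp
  · have hmn : m < n := by have := j.2; omega
    have hIio : Iio j = Iic ⟨m, hmn⟩ := by
      ext a
      simp only [mem_Iio, mem_Iic, Fin.lt_def, Fin.le_def, hm]
      omega
    rw [hIio]
    exact hA.2.1 i ⟨m, hmn⟩

lemma rev_mid (hodd : n % 2 = 1) (hlt : n / 2 < n) :
    (⟨n / 2, hlt⟩ : Fin n).rev = ⟨n / 2, hlt⟩ := by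
  apply Fin.ext
  rw [Fin.val_rev]
  show n - (n / 2 + 1) = n / 2
  omega

lemma mid_prefix {A : Fin n → Fin n → ℝ} (hA : IsASM n A) (hlt : n / 2 < n) (i : Fin n)
    (hmid : A i ⟨n / 2, hlt⟩ = -1 ∨ A i ⟨n / 2, hlt⟩ = 1) :
    (∑ j' ∈ Iic ⟨n / 2, hlt⟩, A i j') + (∑ j' ∈ Iio (⟨n / 2, hlt⟩ : Fin n), A i j') = 1 := by
  have h1 := sum_Iic_eq_add (A i) ⟨n / 2, hlt⟩
  have h2 := hA.2.1 i ⟨n / 2, hlt⟩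
  have h3 := rowIio_mem hA i ⟨n / 2, hlt⟩
  rcases hmid with h | h <;> rcases h2 with h2 | h2 <;> rcases h3 with h3 | h3 <;> linarith

def glue (A : Fin n → Fin n → ℝ) : Fin n → Fin n → ℝ :=
  fun i j => if (j : ℕ) ≤ n / 2 then A i j else A i j.rev

def revM (A : Fin n → Fin n → ℝ) : Fin n → Fin n → ℝ := fun i j => A i j.rev

lemma revM_IsASM {A : Fin n → Fin n → ℝ} (hA : IsASM n A) : IsASM n (revM A) := by
  obtain ⟨h1, h2, h3, h4, h5⟩ := hA
  refine ⟨fun i j => h1 i j.rev, ?_, fun i j => h3 i j.rev, ?_, fun j => h5 j.rev⟩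
  · intro i j
    show (∑ j' ∈ Iic j, A i j'.rev) = 0 ∨ (∑ j' ∈ Iic j, A i j'.rev) = 1
    have e := sum_Iic_rev (A i) j
    have h6 := sum_Iio_add_sum_Ici (A i) j.rev
    have h7 := rowIio_mem ⟨h1, h2, h3, h4, h5⟩ i j.rev
    have h8 := h4 i
    rcases h7 with h7 | h7
    · right; rw [e]; linarith
    · left; rw [e]; linarith
  · intro i
    show (∑ j : Fin n, A i j.rev) = 1
    rw [sum_rev (A i)]
    exact h4 i

lemma glue_rowsum {A : Fin n → Fin n → ℝ} (hA : IsASM n A) (hodd : n % 2 = 1)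
    (hlt : n / 2 < n) (hmid : ∀ i, A i ⟨n / 2, hlt⟩ = -1 ∨ A i ⟨n / 2, hlt⟩ = 1) (i : Fin n) :
    ∑ j, glue A i j = 1 := by
  rw [← sum_Iic_add_sum_Ioi (glue A i) ⟨n / 2, hlt⟩]
  have e1 : ∑ j' ∈ Iic (⟨n / 2, hlt⟩ : Fin n), glue A i j'
      = ∑ j' ∈ Iic (⟨n / 2, hlt⟩ : Fin n), A i j' := by
    refine Finset.sum_congr rfl fun a ha => ?_
    have h : (a : ℕ) ≤ n / 2 := by
      have hx := Finset.mem_Iic.mp ha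
      rwa [Fin.le_def] at hx
    unfold glue
    rw [if_pos h]
  have e2a : ∀ a ∈ Ioi (⟨n / 2, hlt⟩ : Fin n), glue A i a = A i a.rev := by
    intro a ha
    have h : n / 2 < (a : ℕ) := by
      have hx := Finset.mem_Ioi.mp ha
      rwa [Fin.lt_def] at hx
    unfold glue
    rw [if_neg (by omega)]
  have e2 : ∑ j' ∈ Ioi (⟨n / 2, hlt⟩ : Fin n), glue A i j'
      = ∑ j' ∈ Iio (⟨n / 2, hlt⟩ : Fin n), A i j' := by
    rw [Finset.sum_congr rfl e2a, sum_Ioi_rev (A i) ⟨n / 2, hlt⟩, rev_mid hodd hlt]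
  rw [e1, e2]
  exact mid_prefix hA hlt i (hmid i)

lemma glue_IsASM {A : Fin n → Fin n → ℝ} (hA : IsASM n A) (hodd : n % 2 = 1)
    (hlt : n / 2 < n) (hmid : ∀ i, A i ⟨n / 2, hlt⟩ = -1 ∨ A i ⟨n / 2, hlt⟩ = 1) :
    IsASM n (glue A) := by
  have hrow := glue_rowsum hA hodd hlt hmid
  refine ⟨?_, ?_, ?_, hrow, ?_⟩
  · intro i j
    unfold glue
    by_cases h : (j : ℕ) ≤ n / 2
    · rw [if_pos h]; exact hA.1 i j
    · rw [if_neg h]; exact hA.1 i j.rev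
  · intro i j
    by_cases hj : (j : ℕ) ≤ n / 2
    · have e : ∑ j' ∈ Iic j, glue A i j' = ∑ j' ∈ Iic j, A i j' := by
        refine Finset.sum_congr rfl fun a ha => ?_
        have h1 : (a : ℕ) ≤ (j : ℕ) := by
          have hx := Finset.mem_Iic.mp ha
          rwa [Fin.le_def] at hx
        have h2 : (a : ℕ) ≤ n / 2 := le_trans h1 hj
        unfold glue
        rw [if_pos h2]
      rw [e]
      exact hA.2.1 i j
    · have ea : ∀ a ∈ Ioi j, glue A i a = A i a.rev := by
        intro a ha
        have h1 : (j : ℕ) < (a : ℕ) := by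
          have hx := Finset.mem_Ioi.mp ha
          rwa [Fin.lt_def] at hx
        have h2 : ¬ (a : ℕ) ≤ n / 2 := by omega
        unfold glue
        rw [if_neg h2]
      have e : ∑ j' ∈ Ioi j, glue A i j' = ∑ j' ∈ Iio j.rev, A i j' := by
        rw [Finset.sum_congr rfl ea, sum_Ioi_rev (A i) j]
      have h6 := sum_Iic_add_sum_Ioi (glue A i) j
      rw [hrow i, e] at h6
      have h7 := rowIio_mem hA i j.rev
      rcases h7 with h7 | h7
      · right; linarith
      · left; linarith
  · intro i j
    by_cases hj : (j : ℕ) ≤ n / 2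
    · have e : ∀ i', glue A i' j = A i' j := fun i' => by unfold glue; rw [if_pos hj]
      simp only [e]
      exact hA.2.2.1 i j
    · have e : ∀ i', glue A i' j = A i' j.rev := fun i' => by unfold glue; rw [if_neg hj]
      simp only [e]
      exact hA.2.2.1 i j.rev
  · intro j
    by_cases hj : (j : ℕ) ≤ n / 2
    · have e : ∀ i', glue A i' j = A i' j := fun i' => by unfold glue; rw [if_pos hj]
      simp only [e]
      exact hA.2.2.2.2 j
    · have e : ∀ i', glue A i' j = A i' j.rev := fun i' => by unfold glue; rw [if_neg hj]
      simp only [e]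
      exact hA.2.2.2.2 j.rev

lemma glue_symm {A : Fin n → Fin n → ℝ} (hodd : n % 2 = 1) (i j : Fin n) :
    glue A i j = glue A i j.rev := by
  have hj := j.2
  have hrev : ((j.rev : Fin n) : ℕ) = n - ((j : ℕ) + 1) := Fin.val_rev j
  unfold glue
  by_cases h1 : (j : ℕ) ≤ n / 2 <;> by_cases h2 : ((j.rev : Fin n) : ℕ) ≤ n / 2
  · have hjj : j.rev = j := by apply Fin.ext; omega
    rw [hjj, if_pos h1, if_pos h1]
  · rw [if_pos h1, if_neg h2, Fin.rev_rev]
  · rw [if_neg h1, if_pos h2]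
  · exfalso; omega

lemma glue_add {A : Fin n → Fin n → ℝ} (i j : Fin n) :
    glue A i j + glue (revM A) i j = A i j + A i j.rev := by
  unfold glue revM
  by_cases h : (j : ℕ) ≤ n / 2
  · rw [if_pos h, if_pos h]
  · rw [if_neg h, if_neg h, Fin.rev_rev]
    ring

lemma pm_of_alt {x : ℝ} {m : ℕ} (h : x = (-1) ^ m) : x = -1 ∨ x = 1 := by
  rcases Nat.even_or_odd m with hp | hp
  · right; rw [h]; exact Even.neg_one_pow hp
  · left; rw [h]; exact Odd.neg_one_pow hp

lemma vs_mid {A : Fin n → Fin n → ℝ} (hA : IsASM n A) (hsym : ∀ i j, A i j = A i j.rev)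
    (hodd : n % 2 = 1) (hlt : n / 2 < n) (i : Fin n) :
    A i ⟨n / 2, hlt⟩ = (-1) ^ (i : ℕ) := by
  have hmrev : (⟨n / 2, hlt⟩ : Fin n).rev = ⟨n / 2, hlt⟩ := rev_mid hodd hlt
  have hpm : ∀ i' : Fin n, A i' ⟨n / 2, hlt⟩ = -1 ∨ A i' ⟨n / 2, hlt⟩ = 1 := by
    intro i'
    have h4 := hA.2.2.2.1 i'
    have hsplit := sum_Iic_add_sum_Ioi (A i') ⟨n / 2, hlt⟩
    have heq : ∑ j' ∈ Ioi (⟨n / 2, hlt⟩ : Fin n), A i' j'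
        = ∑ j' ∈ Iio (⟨n / 2, hlt⟩ : Fin n), A i' j' := by
      calc ∑ j' ∈ Ioi (⟨n / 2, hlt⟩ : Fin n), A i' j'
          = ∑ j' ∈ Ioi (⟨n / 2, hlt⟩ : Fin n), A i' j'.rev :=
            Finset.sum_congr rfl fun a _ => hsym i' a
        _ = ∑ j' ∈ Iio ((⟨n / 2, hlt⟩ : Fin n).rev), A i' j' := sum_Ioi_rev _ _
        _ = _ := by rw [hmrev]
    have hIic := sum_Iic_eq_add (A i') ⟨n / 2, hlt⟩
    obtain ⟨m, hm⟩ := sum_int (Iio (⟨n / 2, hlt⟩ : Fin n)) (A i') (fun x _ => hA.1 i' x)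
    rcases hA.1 i' ⟨n / 2, hlt⟩ with h | h | h
    · left; exact h
    · exfalso
      rw [h] at hIic
      have hr : (1 : ℝ) = 2 * m := by linarith [hm]
      have hz : (1 : ℤ) = 2 * m := by exact_mod_cast hr
      omega
    · right; exact h
  have key : ∀ m : ℕ, ∀ h : m < n,
      (∑ i' ∈ Iic (⟨m, h⟩ : Fin n), A i' ⟨n / 2, hlt⟩) = (if m % 2 = 0 then 1 else 0) ∧
      A ⟨m, h⟩ ⟨n / 2, hlt⟩ = (-1) ^ m := by
    intro m
    induction m with
    | zero =>
      intro h
      have hIic : Iic (⟨0, h⟩ : Fin n) = {(⟨0, h⟩ : Fin n)} := by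
        ext a
        simp only [mem_Iic, mem_singleton, Fin.le_def, Fin.ext_iff]
        omega
      have hc := hA.2.2.1 ⟨0, h⟩ ⟨n / 2, hlt⟩
      rw [hIic, Finset.sum_singleton] at hc ⊢
      have hA1 : A ⟨0, h⟩ ⟨n / 2, hlt⟩ = 1 := by
        rcases hpm ⟨0, h⟩ with h' | h'
        · exfalso; rcases hc with hc | hc <;> linarith
        · exact h'
      exact ⟨by simp [hA1], by simp [hA1]⟩
    | succ m ih =>
      intro h
      have hmn : m < n := by omega
      have hins : Iic (⟨m + 1, h⟩ : Fin n)
          = insert (⟨m + 1, h⟩ : Fin n) (Iic (⟨m, hmn⟩ : Fin n)) := by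
        ext a
        simp only [mem_Iic, mem_insert, Fin.le_def, Fin.ext_iff]
        omega
      have hnm : (⟨m + 1, h⟩ : Fin n) ∉ Iic (⟨m, hmn⟩ : Fin n) := by
        simp [Fin.le_def]
      have hsum : (∑ i' ∈ Iic (⟨m + 1, h⟩ : Fin n), A i' ⟨n / 2, hlt⟩)
          = A ⟨m + 1, h⟩ ⟨n / 2, hlt⟩ + ∑ i' ∈ Iic (⟨m, hmn⟩ : Fin n), A i' ⟨n / 2, hlt⟩ := by
        rw [hins, Finset.sum_insert hnm]
      obtain ⟨ih1, ih2⟩ := ih hmn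
      have hc := hA.2.2.1 ⟨m + 1, h⟩ ⟨n / 2, hlt⟩
      have hps : ((-1 : ℝ)) ^ (m + 1) = (-1) ^ m * (-1) := pow_succ _ _
      rcases Nat.even_or_odd m with hp | hp
    -- m even
      · have e1 : ((-1 : ℝ)) ^ m = 1 := Even.neg_one_pow hp
        have e2 : m % 2 = 0 := Nat.even_iff.mp hp
        have e3 : ¬ ((m + 1) % 2 = 0) := by omega
        rw [if_pos e2] at ih1
        have hA1 : A ⟨m + 1, h⟩ ⟨n / 2, hlt⟩ = -1 := by
          rcases hpm ⟨m + 1, h⟩ with h' | h'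
          · exact h'
          · exfalso; rcases hc with hc | hc <;> linarith
        refine ⟨?_, by rw [hA1, hps, e1]; ring⟩
        rw [if_neg e3, hsum, hA1, ih1]
        ring
      · have e1 : ((-1 : ℝ)) ^ m = -1 := Odd.neg_one_pow hp
        have e2 : ¬ (m % 2 = 0) := by
          have := Nat.odd_iff.mp hp; omega
        have e3 : (m + 1) % 2 = 0 := by
          have := Nat.odd_iff.mp hp; omega
        rw [if_neg e2] at ih1
        have hA1 : A ⟨m + 1, h⟩ ⟨n / 2, hlt⟩ = 1 := by
          rcases hpm ⟨m + 1, h⟩ with h' | h'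
          · exfalso; rcases hc with hc | hc <;> linarith
          · exact h'
        refine ⟨?_, by rw [hA1, hps, e1]; ring⟩
        rw [if_pos e3, hsum, hA1, ih1]
        ring
  have := (key i.1 i.2).2
  simpa [Fin.eta] using this

lemma alt_range (m : ℕ) : ∑ i ∈ Finset.range (2 * m), ((-1 : ℝ)) ^ i = 0 := by
  induction m with
  | zero => simp
  | succ m ih =>
    have h : 2 * (m + 1) = (2 * m) + 1 + 1 := by ring
    rw [h, Finset.sum_range_succ, Finset.sum_range_succ, ih]
    have h1 : ((-1 : ℝ)) ^ (2 * m) = 1 := by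
      rw [pow_mul]; norm_num
    rw [pow_succ, h1]
    ring

lemma alt_sum_even (h2 : n % 2 = 0) : ∑ i : Fin n, ((-1 : ℝ)) ^ (i : ℕ) = 0 := by
  rw [Fin.sum_univ_eq_sum_range (fun i => ((-1 : ℝ)) ^ i) n]
  obtain ⟨m, hm⟩ : ∃ m, n = 2 * m := ⟨n / 2, by omega⟩
  rw [hm]
  exact alt_range m

end VSASMproof

open VSASMproof Finset in
/-- The polytope of vertically symmetric ASMs is the intersection of the ASM
polytope, the vertically symmetric subspace, and the fixed middle column. -/
theorem VSASM_polytope_description (n : ℕ) (hn : 1 ≤ n) :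
    convexHull ℝ {X : Fin n → Fin n → ℝ | IsASM n X ∧ ∀ i j, X i j = X i j.rev}
      = convexHull ℝ {X : Fin n → Fin n → ℝ | IsASM n X}
        ∩ {X : Fin n → Fin n → ℝ | ∀ i j, X i j = X i j.rev}
        ∩ {X : Fin n → Fin n → ℝ |
            ∀ i : Fin n, X i ⟨n / 2, Nat.div_lt_self (by omega) (by omega)⟩
              = (-1) ^ (i : ℕ)} := by
  classical
  have hlt : n / 2 < n := Nat.div_lt_self (by omega) (by omega)
  rcases Nat.even_or_odd n with heven | hodd
  · -- even case: both sides empty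
    have h2 : n % 2 = 0 := Nat.even_iff.mp heven
    have hVSempty : {X : Fin n → Fin n → ℝ | IsASM n X ∧ ∀ i j, X i j = X i j.rev} = ∅ := by
      ext X
      simp only [Set.mem_setOf_eq, Set.mem_empty_iff_false, iff_false, not_and]
      intro hA hsym
      set i0 : Fin n := ⟨0, by omega⟩
      have h4 := hA.2.2.2.1 i0
      have hsplit := Finset.sum_filter_add_sum_filter_not Finset.univ
        (fun j : Fin n => (j : ℕ) < n / 2) (X i0)
      have heq2 : ∑ j ∈ Finset.univ.filter (fun j : Fin n => ¬ (j : ℕ) < n / 2), X i0 j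
          = ∑ j ∈ Finset.univ.filter (fun j : Fin n => (j : ℕ) < n / 2), X i0 j := by
        refine Finset.sum_nbij' (fun a => a.rev) (fun a => a.rev) ?_ ?_
          (fun a _ => a.rev_rev) (fun a _ => a.rev_rev) (fun a _ => hsym i0 a)
        · intro a ha
          have := a.2
          simp only [mem_filter, mem_univ, true_and, Fin.val_rev] at ha ⊢
          omega
        · intro a ha
          have := a.2
          simp only [mem_filter, mem_univ, true_and, Fin.val_rev] at ha ⊢
          omega
      obtain ⟨m, hm⟩ := sum_int (Finset.univ.filter (fun j : Fin n => (j : ℕ) < n / 2))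
        (X i0) (fun x _ => hA.1 i0 x)
      rw [heq2, hm] at hsplit
      have hr : (1 : ℝ) = 2 * m := by linarith
      have hz : (1 : ℤ) = 2 * m := by exact_mod_cast hr
      omega
    rw [hVSempty, convexHull_empty]
    symm
    rw [Set.eq_empty_iff_forall_notMem]
    rintro X ⟨⟨hconv, hsym⟩, hmidX⟩
    have hcol : ∑ i, X i (⟨n / 2, hlt⟩ : Fin n) = 1 := by
      have hsub : convexHull ℝ {X : Fin n → Fin n → ℝ | IsASM n X}
          ⊆ {X : Fin n → Fin n → ℝ | ∑ i, X i (⟨n / 2, hlt⟩ : Fin n) = 1} := by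
        apply convexHull_min
        · intro Y hY
          exact hY.2.2.2.2 ⟨n / 2, hlt⟩
        · intro x hx y hy a b ha hb hab
          simp only [Set.mem_setOf_eq] at hx hy ⊢
          simp only [Pi.add_apply, Pi.smul_apply, smul_eq_mul]
          rw [Finset.sum_add_distrib, ← Finset.mul_sum, ← Finset.mul_sum, hx, hy]
          linarith
      exact hsub hconv
    have halt : ∑ i : Fin n, ((-1 : ℝ)) ^ (i : ℕ) = ∑ i, X i (⟨n / 2, hlt⟩ : Fin n) :=
      Finset.sum_congr rfl fun i _ => (hmidX i).symm
    rw [hcol, alt_sum_even h2] at halt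
    norm_num at halt
  · -- odd case
    have hodd' : n % 2 = 1 := Nat.odd_iff.mp hodd
    have hmrev : (⟨n / 2, hlt⟩ : Fin n).rev = ⟨n / 2, hlt⟩ := rev_mid hodd' hlt
    apply Set.Subset.antisymm
    · apply convexHull_min
      · rintro X ⟨hA, hsym⟩
        exact ⟨⟨subset_convexHull ℝ _ hA, hsym⟩, fun i => vs_mid hA hsym hodd' hlt i⟩
      · refine Convex.inter (Convex.inter (convex_convexHull ℝ _) ?_) ?_
        · intro x hx y hy a b ha hb hab
          intro i j
          simp only [Set.mem_setOf_eq] at hx hy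
          simp only [Pi.add_apply, Pi.smul_apply, smul_eq_mul]
          rw [hx i j, hy i j]
        · intro x hx y hy a b ha hb hab
          intro i
          simp only [Set.mem_setOf_eq] at hx hy
          simp only [Pi.add_apply, Pi.smul_apply, smul_eq_mul]
          rw [hx i, hy i, ← add_mul, hab, one_mul]
    · rintro X ⟨⟨hconv, hsym⟩, hmidX⟩
      rw [_root_.convexHull_eq] at hconv
      obtain ⟨ι, t, w, z, hw0, hw1, hzmem, hcm⟩ := hconv
      rw [Finset.centerMass_eq_of_sum_1 _ _ hw1] at hcm
      have heval : ∀ (j0 i : Fin n), X i j0 = ∑ a ∈ t, w a * z a i j0 := by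
        intro j0 i
        rw [← hcm]
        simp [Finset.sum_apply, Pi.smul_apply, smul_eq_mul]
      have hzmid : ∀ a ∈ t, w a ≠ 0 → ∀ i : Fin n,
          z a i (⟨n / 2, hlt⟩ : Fin n) = (-1) ^ (i : ℕ) := by
        intro a ha hwa i
        rcases Nat.even_or_odd (i : ℕ) with hp | hp
        · have e1 : ((-1 : ℝ)) ^ (i : ℕ) = 1 := Even.neg_one_pow hp
          have hXi : X i (⟨n / 2, hlt⟩ : Fin n) = 1 := by rw [hmidX i, e1]
          have hkey : ∑ b ∈ t, w b * (1 - z b i (⟨n / 2, hlt⟩ : Fin n)) = 0 := by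
            have e : ∑ b ∈ t, w b * (1 - z b i (⟨n / 2, hlt⟩ : Fin n))
                = (∑ b ∈ t, w b) - ∑ b ∈ t, w b * z b i (⟨n / 2, hlt⟩ : Fin n) := by
              rw [← Finset.sum_sub_distrib]
              exact Finset.sum_congr rfl fun b _ => by ring
            rw [e, hw1, ← heval ⟨n / 2, hlt⟩ i, hXi]
            ring
          have hnn : ∀ b ∈ t, 0 ≤ w b * (1 - z b i (⟨n / 2, hlt⟩ : Fin n)) := by
            intro b hb
            have hwb := hw0 b hb
            rcases (hzmem b hb).1 i ⟨n / 2, hlt⟩ with h | h | h <;>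
              · rw [h]; nlinarith
          have hterm := (Finset.sum_eq_zero_iff_of_nonneg hnn).mp hkey a ha
          rcases mul_eq_zero.mp hterm with h | h
          · exact absurd h hwa
          · rw [e1]; linarith
        · have e1 : ((-1 : ℝ)) ^ (i : ℕ) = -1 := Odd.neg_one_pow hp
          have hXi : X i (⟨n / 2, hlt⟩ : Fin n) = -1 := by rw [hmidX i, e1]
          have hkey : ∑ b ∈ t, w b * (1 + z b i (⟨n / 2, hlt⟩ : Fin n)) = 0 := by
            have e : ∑ b ∈ t, w b * (1 + z b i (⟨n / 2, hlt⟩ : Fin n))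
                = (∑ b ∈ t, w b) + ∑ b ∈ t, w b * z b i (⟨n / 2, hlt⟩ : Fin n) := by
              rw [← Finset.sum_add_distrib]
              exact Finset.sum_congr rfl fun b _ => by ring
            rw [e, hw1, ← heval ⟨n / 2, hlt⟩ i, hXi]
            ring
          have hnn : ∀ b ∈ t, 0 ≤ w b * (1 + z b i (⟨n / 2, hlt⟩ : Fin n)) := by
            intro b hb
            have hwb := hw0 b hb
            rcases (hzmem b hb).1 i ⟨n / 2, hlt⟩ with h | h | h <;>
              · rw [h]; nlinarith
          have hterm := (Finset.sum_eq_zero_iff_of_nonneg hnn).mp hkey a ha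
          rcases mul_eq_zero.mp hterm with h | h
          · exact absurd h hwa
          · rw [e1]; linarith
      set t' := t.filter (fun a => w a ≠ 0) with ht'
      have hw1' : ∑ a ∈ t', w a = 1 := by
        rw [ht', Finset.sum_filter_ne_zero]
        exact hw1
      have hY : ∀ a ∈ t',
          ((1 : ℝ) / 2) • glue (z a) + ((1 : ℝ) / 2) • glue (revM (z a))
            ∈ convexHull ℝ {X : Fin n → Fin n → ℝ | IsASM n X ∧ ∀ i j, X i j = X i j.rev} := by
        intro a ha
        rw [ht', Finset.mem_filter] at ha
        obtain ⟨hat, hwa⟩ := ha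
        have hAa := hzmem a hat
        have hmida : ∀ i : Fin n, z a i ⟨n / 2, hlt⟩ = -1 ∨ z a i ⟨n / 2, hlt⟩ = 1 :=
          fun i => pm_of_alt (hzmid a hat hwa i)
        have hrevA : IsASM n (revM (z a)) := revM_IsASM hAa
        have hmidrev : ∀ i : Fin n,
            revM (z a) i ⟨n / 2, hlt⟩ = -1 ∨ revM (z a) i ⟨n / 2, hlt⟩ = 1 := by
          intro i
          show z a i ((⟨n / 2, hlt⟩ : Fin n).rev) = -1 ∨ z a i ((⟨n / 2, hlt⟩ : Fin n).rev) = 1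
          rw [hmrev]
          exact hmida i
        have hB : glue (z a) ∈ {X : Fin n → Fin n → ℝ | IsASM n X ∧ ∀ i j, X i j = X i j.rev} :=
          ⟨glue_IsASM hAa hodd' hlt hmida, fun i j => glue_symm hodd' i j⟩
        have hC : glue (revM (z a))
            ∈ {X : Fin n → Fin n → ℝ | IsASM n X ∧ ∀ i j, X i j = X i j.rev} :=
          ⟨glue_IsASM hrevA hodd' hlt hmidrev, fun i j => glue_symm hodd' i j⟩
        exact (convex_convexHull ℝ _) (subset_convexHull ℝ _ hB) (subset_convexHull ℝ _ hC)
          (by norm_num) (by norm_num) (by norm_num)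
      have hXsum : X = ∑ a ∈ t',
          w a • (((1 : ℝ) / 2) • glue (z a) + ((1 : ℝ) / 2) • glue (revM (z a))) := by
        funext i j
        have h1 : X i j = ∑ a ∈ t, w a * z a i j := heval j i
        have h2 : X i j.rev = ∑ a ∈ t, w a * z a i j.rev := heval j.rev i
        have h4 : (∑ a ∈ t',
            w a • (((1 : ℝ) / 2) • glue (z a) + ((1 : ℝ) / 2) • glue (revM (z a)))) i j
            = ∑ a ∈ t', w a * ((z a i j + z a i j.rev) / 2) := by
          simp only [Finset.sum_apply, Pi.add_apply, Pi.smul_apply, smul_eq_mul]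
          refine Finset.sum_congr rfl fun a _ => ?_
          rw [show (1 : ℝ) / 2 * glue (z a) i j + 1 / 2 * glue (revM (z a)) i j
              = (glue (z a) i j + glue (revM (z a)) i j) / 2 by ring, glue_add]
        have h5 : ∑ a ∈ t', w a * ((z a i j + z a i j.rev) / 2)
            = ∑ a ∈ t, w a * ((z a i j + z a i j.rev) / 2) := by
          rw [ht']
          refine Finset.sum_filter_of_ne fun x _ hfx => ?_
          intro h0
          exact hfx (by rw [h0, zero_mul])
        rw [h4, h5]
        have h3 : X i j = (X i j + X i j.rev) / 2 := by
          rw [← hsym i j]; ring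
        rw [h3, h1, h2, ← Finset.sum_add_distrib, Finset.sum_div]
        exact Finset.sum_congr rfl fun a _ => by ring
      rw [hXsum]
      exact (convex_convexHull ℝ _).sum_mem
        (fun a ha => hw0 a (Finset.mem_filter.mp ha).1) hw1' hY
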